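/- In the node-and-edge activation model (each of the N nodes is active independently with probability p, and independently each edge of G between two active nodes is retained independently with probability q), with gossip matrix W_1 = I − b L_1 for a real b, the entrywise expectation of W_1² satisfies E[W_1²] = I − 2 b p² q L_G + b² ( p³ q² (L_G² − 2 L_G) + 2 p² q L_G ). -/

import Mathlib

open MeasureTheory ProbabilityTheory Matrix

noncomputable section

/-- The real-valued indicator of a Boolean. -/
def ind (b : Bool) : ℝ := if b then 1 else 0

/-- Adjacency matrix of the random subgraph in the node-and-edge activation
model: edge {i,j} of `G` is kept iff both endpoints are active and the edge
itself is retained. -/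
def A1e {N : ℕ} (G : SimpleGraph (Fin N)) [DecidableRel G.Adj]
    (X : Fin N → Bool) (Y : Fin N → Fin N → Bool) : Matrix (Fin N) (Fin N) ℝ :=
  Matrix.of fun i j => (G.adjMatrix ℝ) i j * ind (X i) * ind (X j) * ind (Y i j)

/-- Diagonal degree matrix of the random subgraph. -/
def D1e {N : ℕ} (G : SimpleGraph (Fin N)) [DecidableRel G.Adj]
    (X : Fin N → Bool) (Y : Fin N → Fin N → Bool) : Matrix (Fin N) (Fin N) ℝ :=
  Matrix.diagonal fun i => ∑ j, A1e G X Y i j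

/-- Laplacian of the random subgraph. -/
def L1e {N : ℕ} (G : SimpleGraph (Fin N)) [DecidableRel G.Adj]
    (X : Fin N → Bool) (Y : Fin N → Fin N → Bool) : Matrix (Fin N) (Fin N) ℝ :=
  D1e G X Y - A1e G X Y

/-!
Write `L₁ = D₁ - A₁`. By independence, an edge `{u, v}` of `G` is present in the random subgraph
with probability `p²q` (two nodes, one edge), and two distinct edges at a common vertex are both
present with probability `p³q²` (three nodes, two edges). Every entry of `D₁²`, `D₁A₁`, `A₁D₁`
and `A₁²` is a sum of products of two entries of `A₁` sharing an index, so these two numbers give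
`E[L₁²] = p³q² L² + 2 (p²q - p³q²) L`, and `E[L₁] = p²q L`; expanding `(I - b L₁)²` finishes.

All random matrices here are functions of the finite activation pattern `(X, Y)`, so expectations
are taken under its law, for which every function is integrable and the expectation is linear.
-/

open Finset

lemma ind_eq_indicator {Ω : Type*} (b : Ω → Bool) (ω : Ω) :
    ind (b ω) = Set.indicator {ω | b ω = true} 1 ω := by
  by_cases h : b ω <;> simp [ind, h]

lemma ind_mul_self (b : Bool) : ind b * ind b = ind b := by
  cases b <;> simp [ind]

section Independence

variable {Ω : Type*} [MeasurableSpace Ω] {μ : Measure Ω}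

lemma integral_ind {b : Ω → Bool} (hb : Measurable b) :
    ∫ ω, ind (b ω) ∂μ = μ.real {ω | b ω = true} := by
  simp_rw [ind_eq_indicator b]
  exact integral_indicator_one (hb (measurableSet_singleton true))

lemma ProbabilityTheory.iIndepFun.integral_prod_ind {ι : Type*} {Z : ι → Ω → Bool}
    (hZ : iIndepFun Z μ) (hm : ∀ k, Measurable (Z k)) (S : Finset ι) :
    ∫ ω, ∏ k ∈ S, ind (Z k ω) ∂μ = ∏ k ∈ S, μ.real {ω | Z k ω = true} := by
  have hS := (hZ.precomp (g := ((↑) : S → ι)) Subtype.val_injective).integral_fun_prod_comp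
    (f := fun _ => ind) (fun k => (hm k).aemeasurable) (fun _ => .of_discrete)
  simp only [← prod_coe_sort S, hS, integral_ind (hm _)]

end Independence

section MatrixMean

variable {α n m : Type*} [MeasurableSpace α] [Finite α] [MeasurableSingletonClass α]
  (ν : Measure α) [IsFiniteMeasure ν]

def matrixMean : (α → Matrix n m ℝ) →ₗ[ℝ] Matrix n m ℝ where
  toFun F := Matrix.of fun i j => ∫ a, F a i j ∂ν
  map_add' F F' := by ext i j; exact integral_add .of_finite .of_finite
  map_smul' c F := by ext i j; exact integral_const_mul c _

lemma matrixMean_apply (F : α → Matrix n m ℝ) (i : n) (j : m) :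
    matrixMean ν F i j = ∫ a, F a i j ∂ν := rfl

lemma matrixMean_one [IsProbabilityMeasure ν] [DecidableEq n] :
    matrixMean ν (1 : α → Matrix n n ℝ) = 1 := by
  ext i j
  simp [matrixMean_apply]

end MatrixMean

lemma one_sub_smul_mul_self {R A : Type*} [CommRing R] [Ring A] [Algebra R A] (b : R) (L : A) :
    (1 - b • L) * (1 - b • L) = 1 - (2 * b) • L + b ^ 2 • (L * L) := by
  simp only [sub_mul, mul_sub, one_mul, mul_one, smul_mul_smul_comm]
  module

lemma SimpleGraph.sum_adjMatrix_apply {V R : Type*} [Fintype V] (G : SimpleGraph V)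
    [DecidableRel G.Adj] [NonAssocSemiring R] (i : V) : ∑ j, G.adjMatrix R i j = G.degree i := by
  simpa [mulVec, dotProduct] using G.adjMatrix_mulVec_const_apply (a := (1 : R)) (v := i)

abbrev Edge (N : ℕ) := {e : Fin N × Fin N // e.1 < e.2}

def Edge.ofNe {N : ℕ} (u v : Fin N) (h : u ≠ v) : Edge N :=
  ⟨(min u v, max u v), min_lt_max.2 h⟩

lemma Edge.apply_ofNe {N : ℕ} {β : Type*} {f : Fin N → Fin N → β} (hf : ∀ i j, f i j = f j i)
    {u v : Fin N} (h : u ≠ v) : f (ofNe u v h).1.1 (ofNe u v h).1.2 = f u v := by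
  rcases le_total u v with huv | hvu
  · simp [ofNe, huv]
  · simp [ofNe, hvu, hf v u]

lemma Edge.ofNe_ne_ofNe {N : ℕ} {c u v : Fin N} (hu : c ≠ u) (hv : c ≠ v) (huv : u ≠ v) :
    ofNe c u hu ≠ ofNe c v hv := by
  intro he
  have := congrArg Subtype.val he
  simp only [ofNe, Prod.mk.injEq, min_def, max_def] at this
  split_ifs at this <;> omega

section RandomAdjacency

variable {N : ℕ} (G : SimpleGraph (Fin N)) [DecidableRel G.Adj] {x : Fin N → Bool}
  {y : Fin N → Fin N → Bool} {i j : Fin N}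

lemma A1e_apply_of_adj (h : G.Adj i j) :
    A1e G x y i j = ind (x i) * ind (x j) * ind (y i j) := by
  simp [A1e, h]

lemma A1e_apply_of_not_adj (h : ¬G.Adj i j) : A1e G x y i j = 0 := by
  simp [A1e, h]

lemma A1e_comm (hy : ∀ i j, y i j = y j i) (i j : Fin N) : A1e G x y i j = A1e G x y j i := by
  simp only [A1e, of_apply, hy i j, G.adjMatrix_apply, G.adj_comm i j]
  ring

end RandomAdjacency

structure IsNodeEdgeActivation {N : ℕ} {Ω : Type*} [MeasurableSpace Ω] (G : SimpleGraph (Fin N))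
    (μ : Measure Ω) (p q : ℝ) (X : Fin N → Ω → Bool) (Y : Fin N → Fin N → Ω → Bool) : Prop where
  symm : ∀ i j, Y i j = Y j i
  measurable_X : ∀ i, Measurable (X i)
  measurable_Y : ∀ i j, Measurable (Y i j)
  iIndepFun : iIndepFun (Sum.elim X fun e : Edge N => Y e.1.1 e.1.2) μ
  measureReal_X : ∀ i, μ.real {ω | X i ω = true} = p
  measureReal_Y : ∀ i j, G.Adj i j → μ.real {ω | Y i j ω = true} = q

def activation {N : ℕ} {Ω : Type*} (X : Fin N → Ω → Bool) (Y : Fin N → Fin N → Ω → Bool)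
    (ω : Ω) : (Fin N → Bool) × (Fin N → Fin N → Bool) :=
  ((X · ω), (Y · · ω))

namespace IsNodeEdgeActivation

variable {N : ℕ} {Ω : Type*} [MeasurableSpace Ω] {G : SimpleGraph (Fin N)} {μ : Measure Ω}
  {p q : ℝ} {X : Fin N → Ω → Bool} {Y : Fin N → Fin N → Ω → Bool}

theorem integral_prod_ind (h : IsNodeEdgeActivation G μ p q X Y) (V : Finset (Fin N))
    (E : Finset (Edge N)) (hE : ∀ e ∈ E, G.Adj e.1.1 e.1.2) :
    ∫ ω, (∏ v ∈ V, ind (X v ω)) * ∏ e ∈ E, ind (Y e.1.1 e.1.2 ω) ∂μ = p ^ #V * q ^ #E := by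
  have hm : ∀ k, Measurable (Sum.elim X (fun e : Edge N => Y e.1.1 e.1.2) k) := by
    rintro (v | e)
    exacts [h.measurable_X v, h.measurable_Y _ _]
  have hVE := h.iIndepFun.integral_prod_ind hm (V.disjSum E)
  simp only [prod_disjSum, Sum.elim_inl, Sum.elim_inr] at hVE
  rw [hVE, prod_congr rfl fun v _ => h.measureReal_X v,
    prod_congr rfl fun e he => h.measureReal_Y _ _ (hE e he), prod_const, prod_const]

theorem integral_edge_active (h : IsNodeEdgeActivation G μ p q X Y) {u v : Fin N}
    (huv : G.Adj u v) :
    ∫ ω, ind (X u ω) * ind (X v ω) * ind (Y u v ω) ∂μ = p ^ 2 * q := by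
  have hne := G.ne_of_adj huv
  have := h.integral_prod_ind {u, v} {Edge.ofNe u v hne}
    (by simpa [Edge.apply_ofNe (fun i j => propext (G.adj_comm i j)) hne])
  simpa [Edge.apply_ofNe h.symm, hne, mul_assoc] using this

theorem integral_two_edges_active (h : IsNodeEdgeActivation G μ p q X Y) {c u v : Fin N}
    (hu : G.Adj c u) (hv : G.Adj c v) (huv : u ≠ v) :
    ∫ ω, ind (X c ω) * ind (X u ω) * ind (X v ω) * ind (Y c u ω) * ind (Y c v ω) ∂μ
      = p ^ 3 * q ^ 2 := by
  have hcu := G.ne_of_adj hu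
  have hcv := G.ne_of_adj hv
  have := h.integral_prod_ind {c, u, v} {Edge.ofNe c u hcu, Edge.ofNe c v hcv}
    (by simp [Edge.apply_ofNe (fun i j => propext (G.adj_comm i j)), hu, hv])
  have hne := Edge.ofNe_ne_ofNe hcu hcv huv
  simpa [Edge.apply_ofNe h.symm, hcu, hcv, huv, hne, mul_assoc] using this

theorem measurable_activation (h : IsNodeEdgeActivation G μ p q X Y) :
    Measurable (activation X Y) :=
  (measurable_pi_lambda _ h.measurable_X).prodMk
    (measurable_pi_lambda _ fun i => measurable_pi_lambda _ (h.measurable_Y i))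

theorem integral_map_activation (h : IsNodeEdgeActivation G μ p q X Y)
    (f : (Fin N → Bool) × (Fin N → Fin N → Bool) → ℝ) :
    ∫ a, f a ∂μ.map (activation X Y) = ∫ ω, f ((X · ω), (Y · · ω)) ∂μ :=
  integral_map h.measurable_activation.aemeasurable .of_discrete

variable [DecidableRel G.Adj]

theorem integral_adj (h : IsNodeEdgeActivation G μ p q X Y) (u v : Fin N) :
    ∫ ω, A1e G (X · ω) (Y · · ω) u v ∂μ = p ^ 2 * q * G.adjMatrix ℝ u v := by
  by_cases huv : G.Adj u v
  · simp [A1e_apply_of_adj G huv, h.integral_edge_active huv, huv]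
  · simp [A1e_apply_of_not_adj G huv, huv]

theorem integral_adj_mul_adj_same_row (h : IsNodeEdgeActivation G μ p q X Y) (c u v : Fin N) :
    ∫ ω, A1e G (X · ω) (Y · · ω) c u * A1e G (X · ω) (Y · · ω) c v ∂μ
      = p ^ 3 * q ^ 2 * (G.adjMatrix ℝ c u * G.adjMatrix ℝ c v)
        + if u = v then (p ^ 2 * q - p ^ 3 * q ^ 2) * G.adjMatrix ℝ c u else 0 := by
  by_cases hu : G.Adj c u
  swap
  · simp [A1e_apply_of_not_adj G hu, hu]
  by_cases hv : G.Adj c v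
  swap
  · rcases eq_or_ne u v with rfl | huv
    · exact absurd hu hv
    · simp [A1e_apply_of_not_adj G hv, hv, huv]
  simp only [A1e_apply_of_adj G hu, A1e_apply_of_adj G hv, G.adjMatrix_apply, hu, hv, if_true]
  rcases eq_or_ne u v with rfl | huv
  · have hsq : ∀ ω, ind (X c ω) * ind (X u ω) * ind (Y c u ω)
          * (ind (X c ω) * ind (X u ω) * ind (Y c u ω))
        = ind (X c ω) * ind (X u ω) * ind (Y c u ω) := fun ω => by
      linear_combination (ind (X u ω) ^ 2 * ind (Y c u ω) ^ 2) * ind_mul_self (X c ω)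
        + (ind (X c ω) * ind (Y c u ω) ^ 2) * ind_mul_self (X u ω)
        + (ind (X c ω) * ind (X u ω)) * ind_mul_self (Y c u ω)
    simp only [hsq, h.integral_edge_active hu, if_true]
    ring
  · have hprod : ∀ ω, ind (X c ω) * ind (X u ω) * ind (Y c u ω)
          * (ind (X c ω) * ind (X v ω) * ind (Y c v ω))
        = ind (X c ω) * ind (X u ω) * ind (X v ω) * ind (Y c u ω) * ind (Y c v ω) := fun ω => by
      linear_combination
        (ind (X u ω) * ind (X v ω) * ind (Y c u ω) * ind (Y c v ω)) * ind_mul_self (X c ω)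
    simp only [hprod, h.integral_two_edges_active hu hv huv, huv, if_false]
    ring

theorem integral_adj_mul_adj (h : IsNodeEdgeActivation G μ p q X Y) (u c v : Fin N) :
    ∫ ω, A1e G (X · ω) (Y · · ω) u c * A1e G (X · ω) (Y · · ω) c v ∂μ
      = p ^ 3 * q ^ 2 * (G.adjMatrix ℝ u c * G.adjMatrix ℝ c v)
        + if u = v then (p ^ 2 * q - p ^ 3 * q ^ 2) * G.adjMatrix ℝ u c else 0 := by
  have hcomm : ∀ ω, A1e G (X · ω) (Y · · ω) u c = A1e G (X · ω) (Y · · ω) c u :=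
    fun ω => A1e_comm G (fun i j => congrFun (h.symm i j) ω) u c
  simp only [hcomm, h.integral_adj_mul_adj_same_row, (G.isSymm_adjMatrix (α := ℝ)).apply u c]

variable [IsFiniteMeasure μ]

theorem matrixMean_adj (h : IsNodeEdgeActivation G μ p q X Y) :
    matrixMean (μ.map (activation X Y)) (Function.uncurry (A1e G))
      = (p ^ 2 * q) • G.adjMatrix ℝ := by
  ext i j
  simp [matrixMean_apply, h.integral_map_activation, h.integral_adj]

theorem matrixMean_deg (h : IsNodeEdgeActivation G μ p q X Y) :
    matrixMean (μ.map (activation X Y)) (Function.uncurry (D1e G))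
      = (p ^ 2 * q) • G.degMatrix ℝ := by
  ext i j
  rcases eq_or_ne i j with rfl | hij
  · simp only [matrixMean_apply, Function.uncurry_def, D1e, diagonal_apply_eq]
    rw [integral_finsetSum _ fun _ _ => .of_finite]
    simp only [h.integral_map_activation, h.integral_adj, ← mul_sum, G.sum_adjMatrix_apply]
    simp [SimpleGraph.degMatrix]
  · simp [matrixMean_apply, Function.uncurry_def, D1e, SimpleGraph.degMatrix, hij]

theorem matrixMean_adj_mul_adj (h : IsNodeEdgeActivation G μ p q X Y) :
    matrixMean (μ.map (activation X Y)) (Function.uncurry (A1e G) * Function.uncurry (A1e G))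
      = (p ^ 3 * q ^ 2) • (G.adjMatrix ℝ * G.adjMatrix ℝ)
        + (p ^ 2 * q - p ^ 3 * q ^ 2) • G.degMatrix ℝ := by
  ext i j
  simp only [matrixMean_apply, Function.uncurry_def, Pi.mul_apply, mul_apply]
  rw [integral_finsetSum _ fun _ _ => .of_finite]
  simp only [h.integral_map_activation, h.integral_adj_mul_adj, sum_add_distrib, ← mul_sum]
  rcases eq_or_ne i j with rfl | hij
  · simp only [if_true, ← mul_sum, G.sum_adjMatrix_apply]
    simp [SimpleGraph.degMatrix, mul_apply]
  · simp [hij, SimpleGraph.degMatrix, mul_apply]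

theorem matrixMean_deg_mul_adj (h : IsNodeEdgeActivation G μ p q X Y) :
    matrixMean (μ.map (activation X Y)) (Function.uncurry (D1e G) * Function.uncurry (A1e G))
      = (p ^ 3 * q ^ 2) • (G.degMatrix ℝ * G.adjMatrix ℝ)
        + (p ^ 2 * q - p ^ 3 * q ^ 2) • G.adjMatrix ℝ := by
  ext i j
  simp only [matrixMean_apply, Function.uncurry_def, Pi.mul_apply, D1e, diagonal_mul, sum_mul]
  rw [integral_finsetSum _ fun _ _ => .of_finite]
  simp only [h.integral_map_activation, h.integral_adj_mul_adj_same_row, sum_add_distrib,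
    ← mul_sum, ← sum_mul, sum_ite_eq', mem_univ, if_true, G.sum_adjMatrix_apply]
  simp only [Matrix.add_apply, Matrix.smul_apply, SimpleGraph.degMatrix, diagonal_mul,
    smul_eq_mul]

theorem matrixMean_adj_mul_deg (h : IsNodeEdgeActivation G μ p q X Y) :
    matrixMean (μ.map (activation X Y)) (Function.uncurry (A1e G) * Function.uncurry (D1e G))
      = (p ^ 3 * q ^ 2) • (G.adjMatrix ℝ * G.degMatrix ℝ)
        + (p ^ 2 * q - p ^ 3 * q ^ 2) • G.adjMatrix ℝ := by
  ext i j
  simp only [matrixMean_apply, Function.uncurry_def, Pi.mul_apply, D1e, mul_diagonal, mul_sum]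
  rw [integral_finsetSum _ fun _ _ => .of_finite]
  simp only [h.integral_map_activation, h.integral_adj_mul_adj, sum_add_distrib, ← mul_sum,
    sum_ite_eq, mem_univ, if_true, G.sum_adjMatrix_apply]
  simp only [Matrix.add_apply, Matrix.smul_apply, SimpleGraph.degMatrix, mul_diagonal,
    smul_eq_mul]

theorem matrixMean_deg_mul_deg (h : IsNodeEdgeActivation G μ p q X Y) :
    matrixMean (μ.map (activation X Y)) (Function.uncurry (D1e G) * Function.uncurry (D1e G))
      = (p ^ 3 * q ^ 2) • (G.degMatrix ℝ * G.degMatrix ℝ)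
        + (p ^ 2 * q - p ^ 3 * q ^ 2) • G.degMatrix ℝ := by
  ext i j
  rcases eq_or_ne i j with rfl | hij
  · simp only [matrixMean_apply, Function.uncurry_def, Pi.mul_apply, D1e, diagonal_mul_diagonal,
      diagonal_apply_eq, sum_mul_sum]
    rw [integral_finsetSum _ fun _ _ => integrable_finsetSum _ fun _ _ => .of_finite]
    simp only [integral_finsetSum _ fun _ _ => .of_finite]
    simp only [h.integral_map_activation, h.integral_adj_mul_adj_same_row, sum_add_distrib,
      ← mul_sum, ← sum_mul, sum_ite_eq, mem_univ, if_true, G.sum_adjMatrix_apply]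
    simp only [Matrix.add_apply, Matrix.smul_apply, SimpleGraph.degMatrix, diagonal_mul_diagonal,
      diagonal_apply_eq, smul_eq_mul]
  · simp [matrixMean_apply, Function.uncurry_def, D1e, SimpleGraph.degMatrix, hij]

theorem matrixMean_lap (h : IsNodeEdgeActivation G μ p q X Y) :
    matrixMean (μ.map (activation X Y)) (Function.uncurry (L1e G))
      = (p ^ 2 * q) • G.lapMatrix ℝ := by
  rw [show Function.uncurry (L1e G) = Function.uncurry (D1e G) - Function.uncurry (A1e G) from rfl,
    map_sub, h.matrixMean_deg, h.matrixMean_adj, SimpleGraph.lapMatrix, smul_sub]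

theorem matrixMean_lap_mul_lap (h : IsNodeEdgeActivation G μ p q X Y) :
    matrixMean (μ.map (activation X Y)) (Function.uncurry (L1e G) * Function.uncurry (L1e G))
      = (p ^ 3 * q ^ 2) • (G.lapMatrix ℝ * G.lapMatrix ℝ - 2 • G.lapMatrix ℝ)
        + (2 * p ^ 2 * q) • G.lapMatrix ℝ := by
  rw [show Function.uncurry (L1e G) = Function.uncurry (D1e G) - Function.uncurry (A1e G) from rfl]
  simp only [sub_mul, mul_sub, map_sub, h.matrixMean_deg_mul_deg, h.matrixMean_deg_mul_adj,
    h.matrixMean_adj_mul_deg, h.matrixMean_adj_mul_adj, SimpleGraph.lapMatrix]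
  module

end IsNodeEdgeActivation

theorem stmt12_general {N : ℕ} (G : SimpleGraph (Fin N)) [DecidableRel G.Adj]
    {Ω : Type*} [MeasurableSpace Ω] (μ : Measure Ω) [IsProbabilityMeasure μ]
    (p q : ℝ) (hp0 : 0 ≤ p) (hq0 : 0 ≤ q) (b : ℝ)
    (X : Fin N → Ω → Bool) (Y : Fin N → Fin N → Ω → Bool)
    (hYsymm : ∀ i j, Y i j = Y j i)
    (hmeasX : ∀ i, Measurable (X i))
    (hmeasY : ∀ i j, Measurable (Y i j))
    -- the node activations and the edge activations (one variable per
    -- unordered pair {i,j} with i < j) are jointly independent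
    (hindep : iIndepFun
      (Sum.elim X (fun e : {e : Fin N × Fin N // e.1 < e.2} => Y e.1.1 e.1.2)) μ)
    (hbernX : ∀ i, μ {ω | X i ω = true} = ENNReal.ofReal p)
    (hbernY : ∀ i j, G.Adj i j → μ {ω | Y i j ω = true} = ENNReal.ofReal q)
    (W1 : Ω → Matrix (Fin N) (Fin N) ℝ)
    (hW1 : ∀ ω, W1 ω = 1 - b • L1e G (fun v => X v ω) (fun i j => Y i j ω)) :
    ∀ i j, ∫ ω, (W1 ω * W1 ω) i j ∂μ
      = ((1 : Matrix (Fin N) (Fin N) ℝ) - (2 * b * p ^ 2 * q) • G.lapMatrix ℝ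
          + b ^ 2 • ((p ^ 3 * q ^ 2) • (G.lapMatrix ℝ * G.lapMatrix ℝ - 2 • G.lapMatrix ℝ)
            + (2 * p ^ 2 * q) • G.lapMatrix ℝ)) i j := by
  have h : IsNodeEdgeActivation G μ p q X Y :=
    { symm := hYsymm, measurable_X := hmeasX, measurable_Y := hmeasY, iIndepFun := hindep
      measureReal_X := fun i => by rw [measureReal_def, hbernX, ENNReal.toReal_ofReal hp0]
      measureReal_Y := fun i j hij => by
        rw [measureReal_def, hbernY i j hij, ENNReal.toReal_ofReal hq0] }
  have := Measure.isProbabilityMeasure_map (μ := μ) h.measurable_activation.aemeasurable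
  let L := Function.uncurry (L1e G)
  have hmean : matrixMean (μ.map (activation X Y)) ((1 - b • L) * (1 - b • L))
      = 1 - (2 * b * p ^ 2 * q) • G.lapMatrix ℝ
          + b ^ 2 • ((p ^ 3 * q ^ 2) • (G.lapMatrix ℝ * G.lapMatrix ℝ - 2 • G.lapMatrix ℝ)
            + (2 * p ^ 2 * q) • G.lapMatrix ℝ) := by
    rw [one_sub_smul_mul_self, map_add, map_sub, map_smul, map_smul, matrixMean_one,
      h.matrixMean_lap, h.matrixMean_lap_mul_lap]
    module
  intro i j
  rw [← hmean, matrixMean_apply, h.integral_map_activation]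
  simp [hW1, L]

theorem stmt12 {N : ℕ} (G : SimpleGraph (Fin N)) [DecidableRel G.Adj]
    {Ω : Type*} [MeasurableSpace Ω] (μ : Measure Ω) [IsProbabilityMeasure μ]
    (p q : ℝ) (hp0 : 0 ≤ p) (hp1 : p ≤ 1) (hq0 : 0 ≤ q) (hq1 : q ≤ 1) (b : ℝ)
    (X : Fin N → Ω → Bool) (Y : Fin N → Fin N → Ω → Bool)
    (hYsymm : ∀ i j, Y i j = Y j i)
    (hmeasX : ∀ i, Measurable (X i))
    (hmeasY : ∀ i j, Measurable (Y i j))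
    -- the node activations and the edge activations (one variable per
    -- unordered pair {i,j} with i < j) are jointly independent
    (hindep : iIndepFun
      (Sum.elim X (fun e : {e : Fin N × Fin N // e.1 < e.2} => Y e.1.1 e.1.2)) μ)
    (hbernX : ∀ i, μ {ω | X i ω = true} = ENNReal.ofReal p)
    (hbernY : ∀ i j, G.Adj i j → μ {ω | Y i j ω = true} = ENNReal.ofReal q)
    (W1 : Ω → Matrix (Fin N) (Fin N) ℝ)
    (hW1 : ∀ ω, W1 ω = 1 - b • L1e G (fun v => X v ω) (fun i j => Y i j ω)) :
    ∀ i j, ∫ ω, (W1 ω * W1 ω) i j ∂μ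
      = ((1 : Matrix (Fin N) (Fin N) ℝ) - (2 * b * p ^ 2 * q) • G.lapMatrix ℝ
          + b ^ 2 • ((p ^ 3 * q ^ 2) • (G.lapMatrix ℝ * G.lapMatrix ℝ - 2 • G.lapMatrix ℝ)
            + (2 * p ^ 2 * q) • G.lapMatrix ℝ)) i j :=
  stmt12_general G μ p q hp0 hq0 b X Y hYsymm hmeasX hmeasY hindep hbernX hbernY W1 hW1

end
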